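/- For the Hurdle function, every positive multiple of w is a strict local optimum: if z = kw with k ≥ 1 and z < n, then h(z-1) < h(z) and h(z+1) < h(z). -/

import Mathlib

/-! Between two consecutive multiples `q * w` and `(q + 1) * w` the ceiling term is already
`q + 1`, while the remainder term is strictly positive, so every interior point lies strictly
below both endpoints, where `hurdle` equals `-q` and `-(q + 1)`. -/

/-- The Hurdle fitness as a function of the number of zeros `z`,
with hurdle width `w`. -/
noncomputable def hurdle (w z : ℕ) : ℝ :=
  -(⌈(z : ℝ) / w⌉ : ℝ) - ((z % w : ℕ) : ℝ) / w

theorem hurdle_mul_self (k : ℕ) {w : ℕ} (hw : w ≠ 0) : hurdle w (k * w) = -k := by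
  have hw' : (w : ℝ) ≠ 0 := Nat.cast_ne_zero.mpr hw
  simp [hurdle, hw']

theorem hurdle_mul_add (q : ℕ) {w r : ℕ} (hr : 0 < r) (hrw : r < w) :
    hurdle w (q * w + r) = -(q + 1) - r / w := by
  have hw : (0 : ℝ) < w := by exact_mod_cast hr.trans hrw
  have hceil : ⌈((q * w + r : ℕ) : ℝ) / w⌉ = q + 1 := by
    rw [Int.ceil_eq_iff, lt_div_iff₀ hw, div_le_iff₀ hw]
    have hr' : (0 : ℝ) < r := by exact_mod_cast hr
    have hrw' : (r : ℝ) < w := by exact_mod_cast hrw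
    push_cast
    constructor <;> nlinarith
  rw [hurdle, hceil, Nat.mul_add_mod_of_lt hrw]
  push_cast
  ring

theorem hurdle_mul_add_lt_left (q : ℕ) {w r : ℕ} (hr : 0 < r) (hrw : r < w) :
    hurdle w (q * w + r) < hurdle w (q * w) := by
  rw [hurdle_mul_add q hr hrw, hurdle_mul_self q (by omega)]
  have : (0 : ℝ) ≤ r / w := by positivity
  linarith

theorem hurdle_mul_add_lt_right (q : ℕ) {w r : ℕ} (hr : 0 < r) (hrw : r < w) :
    hurdle w (q * w + r) < hurdle w ((q + 1) * w) := by
  rw [hurdle_mul_add q hr hrw, hurdle_mul_self (q + 1) (by omega)]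
  have : (0 : ℝ) < r / w := div_pos (by exact_mod_cast hr) (by exact_mod_cast hr.trans hrw)
  push_cast
  linarith

theorem stmt_5_general (w k : ℕ) (hw : 2 ≤ w) (hk : 1 ≤ k) :
    hurdle w (k * w - 1) < hurdle w (k * w) ∧
    hurdle w (k * w + 1) < hurdle w (k * w) := by
  obtain ⟨q, rfl⟩ : ∃ q, k = q + 1 := ⟨k - 1, by omega⟩
  have hpred : (q + 1) * w - 1 = q * w + (w - 1) := by
    rw [add_mul, one_mul]
    omega
  refine ⟨?_, hurdle_mul_add_lt_left (q + 1) one_pos hw⟩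
  rw [hpred]
  exact hurdle_mul_add_lt_right q (by omega) (by omega)

theorem stmt_5 (n w k : ℕ) (hw : 2 ≤ w) (hk : 1 ≤ k) (hkn : k * w < n) :
    hurdle w (k * w - 1) < hurdle w (k * w) ∧
    hurdle w (k * w + 1) < hurdle w (k * w) :=
  stmt_5_general w k hw hk
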